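/- arXiv:2206.07838 — 2 statements merged into one kernel-verified Lean document; each statement's English description precedes it below -/
import Mathlib

section
/- With the modification setup, let U_0 = ⋂_{j=1}^m D(q_j) ⊆ T_Y and let {U_i} be a family of open subsets of T_Y with U_i ⊇ U_0 such that each X_{U_i} → Y is generically finite with ℓ_{X_{U_i}/Y} = ℓ_{X_{U_0}/Y}. Then, for U = ⋃ᵢ U_i, the morphism X_U → Y is generically finite and ℓ_{X_U/Y} = ℓ_{X_{U_0}/Y}. -/
/-!
STATEMENT 8 (modification setup): Let K be a field, A an integral domain of finite type
over K, Y = Spec A, T_Y = Spec A[x₁^±,…,xₙ^±], and fix f_i = Σ_{j=1}^m p_{i,j}·q_j with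
p_{i,j} ∈ A and q_j ∈ K[x₁^±,…,xₙ^±]; X = V(f₁,…,fₙ) ⊆ T_Y.  Let U₀ = ⋂_j D(q_j) ⊆ T_Y
and let {U_i} be a family of open subsets of T_Y with U_i ⊇ U₀ such that each X_{U_i} → Y
is generically finite with ℓ_{X_{U_i}/Y} = ℓ_{X_{U₀}/Y}.  Then, for U = ⋃_i U_i, the
morphism X_U → Y is generically finite and ℓ_{X_U/Y} = ℓ_{X_{U₀}/Y}.

Formalization notes: the generic fiber of X → Y is Spec R_F with
R_F = Frac(A)[x₁^±,…,xₙ^±]/(f₁,…,fₙ), and for U ⊆ T_Y the generic fiber of X_U → Y is the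
set `ZU U` of primes of R_F lying over U.  "X_U → Y is generically finite" means that
`ZU U` is finite, and in that case the generic root count ℓ_{X_U/Y} (the length of the
generic fiber, a finite scheme over Frac(A)) equals the sum over the points P of `ZU U` of
the Frac(A)-vector space dimension of the local ring at P, which is the quantity `ellU U`
below.
-/

set_option synthInstance.maxHeartbeats 1000000
set_option maxHeartbeats 2000000

noncomputable section

/-- The Laurent polynomial ring `R[x₁^±, …, xₙ^±]`. -/
abbrev LaurentPoly (R : Type) [CommRing R] (n : ℕ) : Type :=
  AddMonoidAlgebra R (Fin n → ℤ)

/-- The inclusion `K[x₁^±,…,xₙ^±] → R[x₁^±,…,xₙ^±]` for a `K`-algebra `R`. -/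
def coeffEmbed (K : Type) [Field K] (R : Type) [CommRing R] [Algebra K R] (n : ℕ) :
    LaurentPoly K n →ₐ[K] LaurentPoly R n :=
  (AddMonoidAlgebra.lift K (LaurentPoly R n) (Fin n → ℤ))
    (AddMonoidAlgebra.of R (Fin n → ℤ))

/-- The element `q_j`, regarded as Laurent polynomial with coefficients in `A`. -/
def qA (K : Type) [Field K] (A : Type) [CommRing A] [Algebra K A] (n m : ℕ)
    (q0 : Fin m → LaurentPoly K n) (j : Fin m) : LaurentPoly A n :=
  coeffEmbed K A n (q0 j)

/-- The polynomial `f_i = Σ_j p_{i,j}·q_j`, with coefficients base changed to `Frac(A)`. -/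
def fF (K : Type) [Field K] (A : Type) [CommRing A] [IsDomain A] [Algebra K A] (n m : ℕ)
    (p : Fin n → Fin m → A) (q0 : Fin m → LaurentPoly K n) (i : Fin n) :
    LaurentPoly (FractionRing A) n :=
  ∑ j, algebraMap A (FractionRing A) (p i j) • coeffEmbed K (FractionRing A) n (q0 j)

/-- The coordinate ring of the generic fiber of `X = V(f₁,…,fₙ) → Y`. -/
abbrev RF (K : Type) [Field K] (A : Type) [CommRing A] [IsDomain A] [Algebra K A] (n m : ℕ)
    (p : Fin n → Fin m → A) (q0 : Fin m → LaurentPoly K n) : Type :=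
  LaurentPoly (FractionRing A) n ⧸ Ideal.span (Set.range (fF K A n m p q0))

/-- Base change `A[x₁^±,…,xₙ^±] → Frac(A)[x₁^±,…,xₙ^±]` on coefficients. -/
def coeffBaseChange (A : Type) [CommRing A] [IsDomain A] (n : ℕ) :
    LaurentPoly A n →ₐ[A] LaurentPoly (FractionRing A) n :=
  (AddMonoidAlgebra.lift A (LaurentPoly (FractionRing A) n) (Fin n → ℤ))
    (AddMonoidAlgebra.of (FractionRing A) (Fin n → ℤ))

/-- The map `A[x₁^±,…,xₙ^±] → R_F` inducing `(generic fiber of X) → T_Y` on spectra. -/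
def psiHom (K : Type) [Field K] (A : Type) [CommRing A] [IsDomain A] [Algebra K A] (n m : ℕ)
    (p : Fin n → Fin m → A) (q0 : Fin m → LaurentPoly K n) :
    LaurentPoly A n →+* RF K A n m p q0 :=
  (Ideal.Quotient.mk _).comp (coeffBaseChange A n).toRingHom

/-- The set of points of the generic fiber of `X → Y` lying over a subset `U ⊆ T_Y`,
i.e. the generic fiber of `X_U = X ∩ U → Y`. -/
def ZU (K : Type) [Field K] (A : Type) [CommRing A] [IsDomain A] [Algebra K A] (n m : ℕ)
    (p : Fin n → Fin m → A) (q0 : Fin m → LaurentPoly K n)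
    (U : Set (PrimeSpectrum (LaurentPoly A n))) : Set (PrimeSpectrum (RF K A n m p q0)) :=
  {P | PrimeSpectrum.comap (psiHom K A n m p q0) P ∈ U}

/-- The generic root count ℓ_{X_U/Y}: the length of the generic fiber of `X_U → Y`, i.e.
the sum over its (finitely many) points of the `Frac(A)`-dimensions of the local rings.
(When the generic fiber is not finite this finite sum is junk; the theorems below always
assert finiteness alongside.) -/
def ellU (K : Type) [Field K] (A : Type) [CommRing A] [IsDomain A] [Algebra K A] (n m : ℕ)
    (p : Fin n → Fin m → A) (q0 : Fin m → LaurentPoly K n)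
    (U : Set (PrimeSpectrum (LaurentPoly A n))) : ℕ :=
  ∑ᶠ P : (ZU K A n m p q0 U),
    Module.finrank (FractionRing A) (Localization.AtPrime P.1.asIdeal)

open scoped Classical


section General

variable {R : Type*} [CommRing R]

lemma isMaximal_of_mem_finite_isOpen [IsJacobsonRing R]
    {W : Set (PrimeSpectrum R)} (hWo : IsOpen W) (hWf : W.Finite)
    {P : PrimeSpectrum R} (hP : P ∈ W) : P.asIdeal.IsMaximal := by
  obtain ⟨I, hI⟩ := (PrimeSpectrum.isClosed_iff_zeroLocus_ideal _).mp hWo.isClosed_compl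
  have hIP : ¬ I ≤ P.asIdeal := by
    intro h
    have : P ∈ Wᶜ := by
      rw [hI]; exact (PrimeSpectrum.mem_zeroLocus _ _).mpr h
    exact this hP
  set S : Finset (PrimeSpectrum R) :=
    hWf.toFinset.filter (fun Q => Q.asIdeal.IsMaximal) with hS
  set J : Ideal R := S.inf (fun Q => Q.asIdeal) with hJ
  have hjac : J ⊓ I ≤ P.asIdeal := by
    have h1 : J ⊓ I ≤ P.asIdeal.jacobson := by
      refine le_sInf ?_
      rintro b ⟨hPb, hbmax⟩
      by_cases hbW : (⟨b, hbmax.isPrime⟩ : PrimeSpectrum R) ∈ W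
      · have hmem : (⟨b, hbmax.isPrime⟩ : PrimeSpectrum R) ∈ S := by
          rw [hS, Finset.mem_filter, Set.Finite.mem_toFinset]
          exact ⟨hbW, hbmax⟩
        exact le_trans inf_le_left (Finset.inf_le hmem)
      · have : (⟨b, hbmax.isPrime⟩ : PrimeSpectrum R) ∈ Wᶜ := hbW
        rw [hI] at this
        exact le_trans inf_le_right ((PrimeSpectrum.mem_zeroLocus _ _).mp this)
    rwa [IsJacobsonRing.out ‹IsJacobsonRing R› P.isPrime.isRadical] at h1
  rcases P.isPrime.inf_le.mp hjac with hJP | hIP'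
  · obtain ⟨Q, hQS, hQP⟩ := P.isPrime.inf_le'.mp hJP
    have hQmax : Q.asIdeal.IsMaximal := (Finset.mem_filter.mp hQS).2
    have := hQmax.eq_of_le P.isPrime.ne_top hQP
    rwa [this] at hQmax
  · exact absurd hIP' hIP

lemma eq_of_le_of_mem_finite_isOpen [IsJacobsonRing R]
    {W : Set (PrimeSpectrum R)} (hWo : IsOpen W) (hWf : W.Finite)
    {P : PrimeSpectrum R} (hP : P ∈ W) {Q : PrimeSpectrum R}
    (hQP : Q.asIdeal ≤ P.asIdeal) : Q = P := by
  obtain ⟨I, hI⟩ := (PrimeSpectrum.isClosed_iff_zeroLocus_ideal _).mp hWo.isClosed_compl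
  have hQW : Q ∈ W := by
    by_contra hQW
    have : Q ∈ Wᶜ := hQW
    rw [hI] at this
    have hIQ : I ≤ Q.asIdeal := (PrimeSpectrum.mem_zeroLocus _ _).mp this
    have : P ∈ Wᶜ := by
      rw [hI]; exact (PrimeSpectrum.mem_zeroLocus _ _).mpr (le_trans hIQ hQP)
    exact this hP
  have hQmax := isMaximal_of_mem_finite_isOpen hWo hWf hQW
  exact PrimeSpectrum.ext (hQmax.eq_of_le P.isPrime.ne_top hQP)

lemma isClopen_singleton_of_mem_finite_isOpen [IsJacobsonRing R]
    {W : Set (PrimeSpectrum R)} (hWo : IsOpen W) (hWf : W.Finite)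
    {P : PrimeSpectrum R} (hP : P ∈ W) : IsClopen ({P} : Set (PrimeSpectrum R)) := by
  constructor
  · exact (PrimeSpectrum.isClosed_singleton_iff_isMaximal P).mpr
      (isMaximal_of_mem_finite_isOpen hWo hWf hP)
  · have hC : IsClosed (⋃ Q ∈ (W \ {P} : Set _), ({Q} : Set (PrimeSpectrum R))) := by
      refine Set.Finite.isClosed_biUnion (hWf.subset Set.diff_subset) ?_
      intro Q hQ
      exact (PrimeSpectrum.isClosed_singleton_iff_isMaximal Q).mpr
        (isMaximal_of_mem_finite_isOpen hWo hWf hQ.1)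
    have heq : ({P} : Set (PrimeSpectrum R)) =
        W ∩ (⋃ Q ∈ (W \ {P} : Set _), ({Q} : Set (PrimeSpectrum R)))ᶜ := by
      ext x
      constructor
      · rintro rfl
        refine ⟨hP, ?_⟩
        intro hmem
        obtain ⟨Q, hQ, hxQ⟩ := Set.mem_iUnion₂.mp hmem
        exact hQ.2 (Set.mem_singleton_iff.mp hxQ).symm
      · rintro ⟨hxW, hcomp⟩
        by_contra hne
        exact hcomp (Set.mem_iUnion₂.mpr ⟨x, ⟨hxW, hne⟩, rfl⟩)
    rw [heq]
    exact hWo.inter hC.isOpen_compl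

end General

section Local

variable {F : Type*} [Field F] {R : Type*} [CommRing R] [Algebra F R]

lemma algebraMap_localization_surjective_of_mem_finite_isOpen [IsJacobsonRing R]
    {W : Set (PrimeSpectrum R)} (hWo : IsOpen W) (hWf : W.Finite)
    {P : PrimeSpectrum R} (hP : P ∈ W) :
    Function.Surjective (algebraMap R (Localization.AtPrime P.asIdeal)) := by
  obtain ⟨e, he, hbo⟩ := PrimeSpectrum.exists_idempotent_basicOpen_eq_of_isClopen
    (isClopen_singleton_of_mem_finite_isOpen hWo hWf hP)
  have heP : e ∉ P.asIdeal := by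
    have hmem : P ∈ (PrimeSpectrum.basicOpen e : Set (PrimeSpectrum R)) := by
      rw [← hbo]; rfl
    simpa [PrimeSpectrum.mem_basicOpen] using hmem
  have heQ : ∀ Q : PrimeSpectrum R, Q ≠ P → e ∈ Q.asIdeal := by
    intro Q hQ
    by_contra hEq
    have : Q ∈ (PrimeSpectrum.basicOpen e : Set (PrimeSpectrum R)) := by
      simpa [PrimeSpectrum.mem_basicOpen] using hEq
    rw [← hbo] at this
    exact hQ this
  intro y
  obtain ⟨⟨x, s⟩, rfl⟩ := IsLocalization.mk'_surjective P.asIdeal.primeCompl y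
  set s' : R := (s : R) * e + (1 - e) with hs'def
  have hs' : IsUnit s' := by
    by_contra h
    obtain ⟨m, hmmax, hsm⟩ := exists_max_ideal_of_mem_nonunits (mem_nonunits_iff.mpr h)
    by_cases hpm : (⟨m, hmmax.isPrime⟩ : PrimeSpectrum R) = P
    · have hmP : m = P.asIdeal := congrArg PrimeSpectrum.asIdeal hpm
      rw [hmP] at hsm
      have h2 : s' * e = (s : R) * (e * e) + (e - e * e) := by ring
      rw [he] at h2
      have h3 : s' * e = (s : R) * e := by rw [h2]; ring
      have h4 : (s : R) * e ∈ P.asIdeal := by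
        rw [← h3]; exact P.asIdeal.mul_mem_right e hsm
      rcases P.isPrime.mem_or_mem h4 with h5 | h5
      · exact s.2 h5
      · exact heP h5
    · have hem : e ∈ m := heQ _ hpm
      have h1e : (1 : R) - e ∈ m := by
        have hsub : s' - (s : R) * e ∈ m :=
          Ideal.sub_mem _ hsm (Ideal.mul_mem_left _ _ hem)
        have : s' - (s : R) * e = 1 - e := by rw [hs'def]; ring
        rwa [this] at hsub
      have : (1 : R) ∈ m := by
        have := Ideal.add_mem _ h1e hem
        simpa using this
      exact hmmax.ne_top (Ideal.eq_top_iff_one m |>.mpr this)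
  set L := Localization.AtPrime P.asIdeal
  have hue : IsUnit (algebraMap R L e) :=
    IsLocalization.map_units L (⟨e, heP⟩ : P.asIdeal.primeCompl)
  have he1 : algebraMap R L e = 1 := by
    refine hue.mul_left_cancel ?_
    rw [← map_mul, he, mul_one]
  have hss' : algebraMap R L (s : R) = algebraMap R L s' := by
    rw [hs'def, map_add, map_mul, map_sub, map_one, he1]
    ring
  refine ⟨x * ↑hs'.unit⁻¹, ?_⟩
  rw [IsLocalization.eq_mk'_iff_mul_eq, map_mul, hss', mul_assoc, ← map_mul,
    IsUnit.val_inv_mul, map_one, mul_one]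

end Local

section Local2

variable {F : Type*} [Field F] {R : Type*} [CommRing R] [Algebra F R]

lemma finrank_localization_pos_of_mem_finite_isOpen [Algebra.FiniteType F R]
    {W : Set (PrimeSpectrum R)} (hWo : IsOpen W) (hWf : W.Finite)
    {P : PrimeSpectrum R} (hP : P ∈ W) :
    0 < Module.finrank F (Localization.AtPrime P.asIdeal) := by
  haveI : IsJacobsonRing R := isJacobsonRing_of_finiteType (A := F)
  set L := Localization.AtPrime P.asIdeal with hLdef
  have hsurj : Function.Surjective (algebraMap R L) :=
    algebraMap_localization_surjective_of_mem_finite_isOpen hWo hWf hP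
  -- L is a finite type F-algebra
  have hsurj' : Function.Surjective (IsScalarTower.toAlgHom F R L) := hsurj
  haveI hft : Algebra.FiniteType F L :=
    Algebra.FiniteType.of_surjective
      (IsScalarTower.toAlgHom F R L) hsurj'
  -- L has a unique prime ideal, namely its maximal ideal
  have huniq : ∀ q : Ideal L, q.IsPrime → q = IsLocalRing.maximalIdeal L := by
    intro q hq
    have hle : q ≤ IsLocalRing.maximalIdeal L := IsLocalRing.le_maximalIdeal hq.ne_top
    have hcomap : q.comap (algebraMap R L) ≤ P.asIdeal :=
      le_of_le_of_eq (Ideal.comap_mono hle) (Localization.AtPrime.comap_maximalIdeal)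
    haveI : (q.comap (algebraMap R L)).IsPrime := hq.comap _
    have heq : (⟨q.comap (algebraMap R L), inferInstance⟩ : PrimeSpectrum R) = P :=
      eq_of_le_of_mem_finite_isOpen hWo hWf hP hcomap
    have heq' : q.comap (algebraMap R L) =
        (IsLocalRing.maximalIdeal L).comap (algebraMap R L) := by
      refine Eq.trans ?_ Localization.AtPrime.comap_maximalIdeal.symm
      exact congrArg PrimeSpectrum.asIdeal heq
    exact Ideal.comap_injective_of_surjective _ hsurj heq'
  -- hence the maximal ideal is the nilradical
  have hnil : nilradical L = IsLocalRing.maximalIdeal L := by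
    have hset : {J : Ideal L | J.IsPrime} = {IsLocalRing.maximalIdeal L} := by
      ext q
      constructor
      · intro hq; exact huniq q hq
      · rintro rfl
        exact (IsLocalRing.maximalIdeal.isMaximal L).isPrime
    rw [nilradical_eq_sInf, hset, sInf_singleton]
  -- the residue field is a finite extension of F
  set π : L →ₐ[F] IsLocalRing.ResidueField L :=
    { IsLocalRing.residue L with commutes' := fun f => rfl } with hπdef
  have hπsurj : Function.Surjective π := Ideal.Quotient.mk_surjective
  haveI : Algebra.FiniteType F (IsLocalRing.ResidueField L) :=
    Algebra.FiniteType.of_surjective π hπsurj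
  haveI : Module.Finite F (IsLocalRing.ResidueField L) :=
    finite_of_finite_type_of_isJacobsonRing F (IsLocalRing.ResidueField L)
  -- every element of L is integral over F
  haveI : Algebra.IsIntegral F L := by
    constructor
    intro x
    obtain ⟨g, hgmonic, hg⟩ :=
      (Algebra.IsIntegral.isIntegral (R := F) (π x))
    have hmem : Polynomial.aeval x g ∈ IsLocalRing.maximalIdeal L := by
      refine Ideal.Quotient.eq_zero_iff_mem.mp ?_
      show π (Polynomial.aeval x g) = 0
      have h5 : π (Polynomial.aeval x g) = Polynomial.aeval (π x) g :=
        (Polynomial.aeval_algHom_apply _ _ _).symm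
      rw [← Polynomial.aeval_def] at hg
      exact h5.trans hg
    rw [← hnil] at hmem
    obtain ⟨k, hk⟩ := mem_nilradical.mp hmem
    rcases Nat.eq_zero_or_pos k with rfl | hkpos
    · exfalso
      rw [pow_zero] at hk
      exact one_ne_zero hk
    · refine ⟨g ^ k, hgmonic.pow _, ?_⟩
      rw [← Polynomial.aeval_def, map_pow, hk]
  haveI : Module.Finite F L := Algebra.IsIntegral.finite
  exact Module.finrank_pos_iff.mpr inferInstance

end Local2

theorem genericRootCount_union_of_compatible_opens
    (K : Type) [Field K]
    (A : Type) [CommRing A] [IsDomain A] [Algebra K A] [Algebra.FiniteType K A]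
    (n m : ℕ) (p : Fin n → Fin m → A) (q0 : Fin m → LaurentPoly K n)
    -- U₀ = ⋂_{j=1}^m D(q_j) ⊆ T_Y
    (U0 : Set (PrimeSpectrum (LaurentPoly A n)))
    (hU0 : U0 = ⋂ j : Fin m, (PrimeSpectrum.basicOpen (qA K A n m q0 j) : Set _))
    -- a (nonempty) family of open subsets U_i ⊇ U₀ of T_Y …
    (ι : Type) [Nonempty ι] (U : ι → Set (PrimeSpectrum (LaurentPoly A n)))
    (hopen : ∀ i, IsOpen (U i)) (hsub : ∀ i, U0 ⊆ U i)
    -- … such that each X_{U_i} → Y is generically finite with ℓ_{X_{U_i}/Y} = ℓ_{X_{U₀}/Y}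
    (hfin : ∀ i, (ZU K A n m p q0 (U i)).Finite)
    (hell : ∀ i, ellU K A n m p q0 (U i) = ellU K A n m p q0 U0) :
    -- then X_U → Y, U = ⋃ᵢ Uᵢ, is generically finite with ℓ_{X_U/Y} = ℓ_{X_{U₀}/Y}
    (ZU K A n m p q0 (⋃ i, U i)).Finite ∧
      ellU K A n m p q0 (⋃ i, U i) = ellU K A n m p q0 U0 := by
  classical
  set F := FractionRing A
  set R := RF K A n m p q0 with hRdef
  set ψ := psiHom K A n m p q0 with hψdef
  haveI : AddMonoid.FG (Fin n → ℤ) :=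
    AddGroup.fg_iff_addMonoid_fg.mp (Module.Finite.iff_addGroup_fg.mp inferInstance)
  haveI hftL : Algebra.FiniteType F (LaurentPoly F n) :=
    AddMonoidAlgebra.finiteType_of_fg F _
  haveI hftR : Algebra.FiniteType F R :=
    Algebra.FiniteType.of_surjective
      (Ideal.Quotient.mkₐ F (Ideal.span (Set.range (fF K A n m p q0))))
      (Ideal.Quotient.mkₐ_surjective F _)
  obtain ⟨i0⟩ := ‹Nonempty ι›
  have hZopen : ∀ i, IsOpen (ZU K A n m p q0 (U i)) := fun i =>
    (hopen i).preimage (PrimeSpectrum.continuous_comap ψ)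
  have hZU0sub : ∀ i, ZU K A n m p q0 U0 ⊆ ZU K A n m p q0 (U i) :=
    fun i P hP => hsub i hP
  have h0fin : (ZU K A n m p q0 U0).Finite := (hfin i0).subset (hZU0sub i0)
  set f : PrimeSpectrum R → ℕ :=
    fun Q => Module.finrank F (Localization.AtPrime Q.asIdeal) with hfdef
  have hellfin : ∀ (V : Set (PrimeSpectrum (LaurentPoly A n)))
      (hV : (ZU K A n m p q0 V).Finite),
      ellU K A n m p q0 V = ∑ Q ∈ hV.toFinset, f Q := by
    intro V hV
    calc ellU K A n m p q0 V = ∑ᶠ Q : (ZU K A n m p q0 V), f Q.1 := rfl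
      _ = ∑ᶠ Q ∈ ZU K A n m p q0 V, f Q := finsum_set_coe_eq_finsum_mem _
      _ = ∑ Q ∈ hV.toFinset, f Q := finsum_mem_eq_finite_toFinset_sum _ hV
  have heqZ : ∀ i, ZU K A n m p q0 (U i) = ZU K A n m p q0 U0 := by
    intro i
    refine Set.Subset.antisymm ?_ (hZU0sub i)
    intro P hP
    by_contra hP0
    have hpos : 0 < f P :=
      finrank_localization_pos_of_mem_finite_isOpen (hZopen i) (hfin i) hP
    have hssub : h0fin.toFinset ⊆ (hfin i).toFinset := by
      intro Q hQ
      rw [Set.Finite.mem_toFinset] at hQ ⊢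
      exact hZU0sub i hQ
    have hlt : ∑ Q ∈ h0fin.toFinset, f Q < ∑ Q ∈ (hfin i).toFinset, f Q := by
      refine Finset.sum_lt_sum_of_subset hssub ?_ ?_ hpos ?_
      · rw [Set.Finite.mem_toFinset]; exact hP
      · rw [Set.Finite.mem_toFinset]; exact hP0
      · intro j _ _; exact Nat.zero_le _
    have he := hell i
    rw [hellfin (U i) (hfin i), hellfin U0 h0fin] at he
    omega
  have hUnion : ZU K A n m p q0 (⋃ i, U i) = ZU K A n m p q0 U0 := by
    ext P
    constructor
    · intro hP
      have hP' : PrimeSpectrum.comap ψ P ∈ ⋃ i, U i := hP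
      obtain ⟨i, hPi⟩ := Set.mem_iUnion.mp hP'
      have hPU : P ∈ ZU K A n m p q0 (U i) := hPi
      rwa [heqZ i] at hPU
    · intro hP
      exact Set.mem_iUnion.mpr ⟨i0, hZU0sub i0 hP⟩
  have hfinU : (ZU K A n m p q0 (⋃ i, U i)).Finite := by rw [hUnion]; exact h0fin
  have ht : hfinU.toFinset = h0fin.toFinset := by
    ext Q
    simp only [Set.Finite.mem_toFinset, hUnion]
  refine ⟨hfinU, ?_⟩
  rw [hellfin _ hfinU, hellfin U0 h0fin, ht]
end
end

section
/- Let K be a field, A = K[a₁,…,a_s] a polynomial ring, Y = Spec(A), and fix a representation f_i = Σ_{j=1}^m p_{i,j}·q_j (1 ≤ i ≤ n) with p_{i,j} ∈ A and q_j ∈ K[x₁^±,…,xₙ^±], where all p_{i,j} are homogeneous linear forms in a₁,…,a_s. Suppose there exist subrings A_j ⊆ A generated by linear forms such that A = ⊗_{K, j=1}^m A_j and p_{i,j} ∈ A_j for all i, j. Then X̂_lin = V(f̂₁,…,f̂ₙ) ⊆ T̂_Y = Spec(A[x₁^±,…,xₙ^±, w₁^±,…,w_m^±]) is torus-equivariant,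 where f̂_i = Σ_{j=1}^m p_{i,j}w_j. -/
/-!
STATEMENT 14: Let K be a field, A = K[a₁,…,a_s] a polynomial ring, Y = Spec A, and fix a
representation f_i = Σ_{j=1}^m p_{i,j}·q_j (1 ≤ i ≤ n) with p_{i,j} ∈ A and
q_j ∈ K[x₁^±,…,xₙ^±], where all p_{i,j} are homogeneous linear forms in a₁,…,a_s.
Suppose there exist subrings A_j ⊆ A generated by linear forms such that
A = ⊗_{K, j=1}^m A_j and p_{i,j} ∈ A_j for all i, j.  Then
X̂_lin = V(f̂₁,…,f̂ₙ) ⊆ T̂_Y = Spec A[x₁^±,…,xₙ^±,w₁^±,…,w_m^±] is torus-equivariant,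
where f̂_i = Σ_{j=1}^m p_{i,j}w_j.

Formalization notes:
* A = MvPolynomial (Fin s) K.  "Subrings A_j generated by linear forms with ⊗_K A_j = A
  and p_{i,j} ∈ A_j" is encoded by K-subspaces W_j of the space of homogeneous linear
  forms which are independent and together span all homogeneous linear forms (so that,
  with A_j = K[W_j], one has ⊗_K A_j = A), with p_{i,j} ∈ A_j = adjoin K W_j.
* Torus-equivariance of X̂_lin ⊆ T̂_Y is stated via its functor of points on fields:
  there is a coaction ρ : A → A[x^±,w^±] (i.e. a morphism T̂_Y ×_Y Y → Y over K) inducing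
  an action (λ,P) ↦ λ·P on the points of Y with values in any field L, such that the
  fiber of X̂_lin over λ·P is the translate by λ of the fiber over P (as ideals of
  L[x^±,w^±]); this is the predicate `LinPartTorusEquivariant` below.
-/

set_option synthInstance.maxHeartbeats 1000000
set_option maxHeartbeats 2000000

noncomputable section

/-- The character lattice of the `(n+m)`-torus with coordinates `x₁,…,xₙ,w₁,…,w_m`. -/
abbrev TorusGroup (n m : ℕ) : Type := (Fin n → ℤ) × (Fin m → ℤ)

/-- Translation of the torus `Spec L[G]` by the `L`-point `λ : G → Lˣ` (as a map on
coordinate rings): the monomial `x^g` is sent to `λ(g)·x^g`. -/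
def translationHom (L : Type) [CommRing L] (G : Type) [AddCommMonoid G]
    (lam : Multiplicative G →* L) : AddMonoidAlgebra L G →ₐ[L] AddMonoidAlgebra L G :=
  (AddMonoidAlgebra.lift L (AddMonoidAlgebra L G) G)
    (AddMonoidAlgebra.singleHom.comp (lam.prod (MonoidHom.id (Multiplicative G))))

/-- Given a coaction ρ : A → A[x^±,w^±] (i.e. a morphism T̂_Y ×_Y Y → Y of schemes over
K), the induced action of a torus point λ ∈ T̂(L) on an L-point P : A → L of Y. -/
def actPoint {K A : Type} [Field K] [CommRing A] [Algebra K A] {n m : ℕ}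
    (ρ : A →ₐ[K] AddMonoidAlgebra A (TorusGroup n m)) {L : Type} [CommRing L]
    (lam : Multiplicative (TorusGroup n m) →* Lˣ) (P : A →+* L) : A →+* L :=
  (AddMonoidAlgebra.liftNCRingHom P ((Units.coeHom L).comp lam)
    (fun _ _ => Commute.all _ _)).comp ρ.toRingHom

/-- The ideal of the fiber of `X̂_lin = V(f̂₁,…,f̂ₙ)`, `f̂_i = Σ_j p_{i,j}w_j`, over the
`L`-valued point `P` of `Y`. -/
def linFiberIdeal {A : Type} [CommRing A] {n m : ℕ} (p : Fin n → Fin m → A)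
    {L : Type} [CommRing L] (P : A →+* L) :
    Ideal (AddMonoidAlgebra L (TorusGroup n m)) :=
  Ideal.span (Set.range fun i : Fin n => ∑ j,
    AddMonoidAlgebra.single ((0, Pi.single j 1) : TorusGroup n m) (P (p i j)))

/-- `X̂_lin → T̂_Y` is torus-equivariant: there is an action of the relative torus `T̂_Y`
on `Y` (given by a coaction ρ, acting on field-valued points) such that the fiber of
`X̂_lin` over `λ·P` is the translate by `λ` of the fiber over `P`, for every field `L` and
every `L`-valued point `(λ, P)` of `T̂_Y ×_Y Y`. -/
def LinPartTorusEquivariant (K : Type) [Field K] {A : Type} [CommRing A] [Algebra K A]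
    {n m : ℕ} (p : Fin n → Fin m → A) : Prop :=
  ∃ ρ : A →ₐ[K] AddMonoidAlgebra A (TorusGroup n m),
    (∀ (L : Type) [Field L] (P : A →+* L),
      actPoint ρ (1 : Multiplicative (TorusGroup n m) →* Lˣ) P = P) ∧
    (∀ (L : Type) [Field L] (lam mu : Multiplicative (TorusGroup n m) →* Lˣ) (P : A →+* L),
      actPoint ρ (lam * mu) P = actPoint ρ lam (actPoint ρ mu P)) ∧
    (∀ (L : Type) [Field L] (lam : Multiplicative (TorusGroup n m) →* Lˣ) (P : A →+* L),
      Ideal.map (translationHom L (TorusGroup n m) ((Units.coeHom L).comp lam)).toRingHom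
          (linFiberIdeal p P)
        = linFiberIdeal p (actPoint ρ lam P))

-- ========== auxiliary lemmas ==========
section AuxLemmas
open MvPolynomial

lemma aux_indep_sum_eq {K V : Type*} [Field K] [AddCommGroup V] [Module K V] {m : ℕ}
    {W : Fin m → Submodule K V} (hW : iSupIndep W)
    (g h : Fin m → V) (hg : ∀ j, g j ∈ W j) (hh : ∀ j, h j ∈ W j)
    (hsum : ∑ j, g j = ∑ j, h j) : g = h := by
  classical
  funext j0
  have hd : ∀ j, g j - h j ∈ W j := fun j => sub_mem (hg j) (hh j)
  have hz : (g j0 - h j0) + ∑ j ∈ Finset.univ.erase j0, (g j - h j) = 0 := by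
    rw [Finset.add_sum_erase Finset.univ (fun j => g j - h j) (Finset.mem_univ j0),
      Finset.sum_sub_distrib, hsum, sub_self]
  have h1 : g j0 - h j0 = -∑ j ∈ Finset.univ.erase j0, (g j - h j) :=
    eq_neg_of_add_eq_zero_left hz
  have hmem : g j0 - h j0 ∈ ⨆ (j) (_ : j ≠ j0), W j := by
    rw [h1]
    exact neg_mem (Submodule.sum_mem _ fun j hj =>
      Submodule.mem_iSup_of_mem j (Submodule.mem_iSup_of_mem (Finset.ne_of_mem_erase hj) (hd j)))
  have h0 : g j0 - h j0 = 0 := by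
    have := (hW j0).le_bot (Submodule.mem_inf.mpr ⟨hd j0, hmem⟩)
    simpa using this
  exact sub_eq_zero.mp h0

lemma aux_decomp {K V : Type*} [Field K] [AddCommGroup V] [Module K V] {m : ℕ}
    {W : Fin m → Submodule K V} {x : V} (hx : x ∈ ⨆ j, W j) :
    ∃ g : Fin m → V, (∀ j, g j ∈ W j) ∧ ∑ j, g j = x := by
  classical
  obtain ⟨f, hf, hsum⟩ := (Submodule.mem_iSup_iff_exists_finsupp W x).mp hx
  refine ⟨fun j => f j, hf, ?_⟩
  rw [← hsum, Finsupp.sum_fintype]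
  · simp

lemma aux_degree_one {s : ℕ} (d : Fin s →₀ ℕ) (h : (∑ i ∈ d.support, d i) = 1) :
    ∃ k, d = Finsupp.single k 1 := by
  classical
  have hne : d.support.Nonempty := by
    by_contra hc
    rw [Finset.not_nonempty_iff_eq_empty] at hc
    simp [hc] at h
  obtain ⟨k, hk⟩ := hne
  have h2 : d k + ∑ i ∈ d.support.erase k, d i = 1 := by
    rw [Finset.add_sum_erase _ _ hk]; exact h
  have hk1 : 1 ≤ d k := Nat.one_le_iff_ne_zero.mpr (Finsupp.mem_support_iff.mp hk)
  have hdk : d k = 1 := le_antisymm (by omega) hk1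
  have hrest : ∑ i ∈ d.support.erase k, d i = 0 := by omega
  refine ⟨k, Finsupp.ext fun a => ?_⟩
  rcases eq_or_ne a k with rfl | hak
  · simp [hdk]
  · rw [Finsupp.single_apply, if_neg (Ne.symm hak)]
    by_cases ha : a ∈ d.support
    · exact (Finset.sum_eq_zero_iff.mp hrest a (Finset.mem_erase.mpr ⟨hak, ha⟩))
    · exact Finsupp.notMem_support_iff.mp ha

lemma aux_mem_span_X {K : Type*} [Field K] {s : ℕ} {p : MvPolynomial (Fin s) K}
    (hp : p.IsHomogeneous 1) :
    p ∈ Submodule.span K (Set.range (X : Fin s → MvPolynomial (Fin s) K)) := by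
  classical
  rw [← p.support_sum_monomial_coeff]
  refine Submodule.sum_mem _ fun d hd => ?_
  have hdeg : (∑ i ∈ d.support, d i) = 1 := by
    have := hp (mem_support_iff.mp hd)
    simpa [Finsupp.weight, Finsupp.linearCombination, Finsupp.sum] using this
  obtain ⟨k, rfl⟩ := aux_degree_one d hdeg
  have heq : monomial (Finsupp.single k 1) (coeff (Finsupp.single k 1) p)
      = (coeff (Finsupp.single k 1) p) • X k := by
    simp [X, smul_monomial]
  rw [heq]
  exact Submodule.smul_mem _ _ (Submodule.subset_span ⟨k, rfl⟩)


lemma aux_eq_C_of_hom_zero {K : Type*} [Field K] {s : ℕ} {a : MvPolynomial (Fin s) K}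
    (ha : a.IsHomogeneous 0) : ∃ c : K, a = C c := by
  classical
  refine ⟨coeff 0 a, ?_⟩
  ext d
  rcases eq_or_ne d 0 with rfl | hd
  · simp
  · rw [coeff_C, if_neg (Ne.symm hd)]
    by_contra hc
    have h0 := ha hc
    apply hd
    ext i
    simp only [Finsupp.coe_zero, Pi.zero_apply]
    by_cases hi : i ∈ d.support
    · have : (∑ i ∈ d.support, d i) = 0 := by
        simpa [Finsupp.weight, Finsupp.linearCombination, Finsupp.sum] using h0
      exact Finset.sum_eq_zero_iff.mp this i hi
    · exact Finsupp.notMem_support_iff.mp hi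

lemma aux_adjoin_linear {K : Type*} [Field K] {s : ℕ}
    {W : Submodule K (MvPolynomial (Fin s) K)}
    (hWlin : W ≤ MvPolynomial.homogeneousSubmodule (Fin s) K 1)
    {p : MvPolynomial (Fin s) K} (hp : p.IsHomogeneous 1)
    (hmem : p ∈ Algebra.adjoin K (W : Set (MvPolynomial (Fin s) K))) : p ∈ W := by
  classical
  have hspan : p ∈ Submodule.span K (Submonoid.closure (W : Set (MvPolynomial (Fin s) K)) :
      Set (MvPolynomial (Fin s) K)) := by
    rw [← Algebra.adjoin_eq_span]
    exact hmem
  -- every element of the closure satisfies Q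
  have hQ : ∀ x ∈ Submonoid.closure (W : Set (MvPolynomial (Fin s) K)),
      ∃ d, x.IsHomogeneous d ∧ (d = 1 → x ∈ W) := by
    intro x hx
    induction hx using Submonoid.closure_induction with
    | mem y hy => exact ⟨1, hWlin hy, fun _ => hy⟩
    | one => exact ⟨0, by simpa using isHomogeneous_C (Fin s) (1 : K), by omega⟩
    | mul a b _ _ ha hb =>
      obtain ⟨da, hha, hwa⟩ := ha
      obtain ⟨db, hhb, hwb⟩ := hb
      refine ⟨da + db, hha.mul hhb, fun h1 => ?_⟩
      rcases Nat.add_eq_one_iff.mp h1 with ⟨h0, h1'⟩ | ⟨h1', h0⟩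
      · subst h0 h1'
        obtain ⟨c, rfl⟩ := aux_eq_C_of_hom_zero hha
        have : C c * b = c • b := by rw [smul_eq_C_mul]
        rw [this]
        exact Submodule.smul_mem _ _ (hwb rfl)
      · subst h0 h1'
        obtain ⟨c, rfl⟩ := aux_eq_C_of_hom_zero hhb
        have : a * C c = c • a := by rw [smul_eq_C_mul, mul_comm]
        rw [this]
        exact Submodule.smul_mem _ _ (hwa rfl)
  -- hence the closure lies in the comap of W under homogeneousComponent 1
  have hsub : (Submonoid.closure (W : Set (MvPolynomial (Fin s) K)) :
      Set (MvPolynomial (Fin s) K)) ⊆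
      (Submodule.comap (homogeneousComponent (σ := Fin s) (R := K) 1) W :
        Set (MvPolynomial (Fin s) K)) := by
    intro x hx
    obtain ⟨d, hhd, hwd⟩ := hQ x hx
    have heq : homogeneousComponent 1 x = if 1 = d then x else 0 :=
      homogeneousComponent_of_mem ((mem_homogeneousSubmodule _ _).mpr hhd)
    show x ∈ Submodule.comap (homogeneousComponent (σ := Fin s) (R := K) 1) W
    rw [Submodule.mem_comap, heq]
    split
    · exact hwd (by omega)
    · exact zero_mem _
  have := Submodule.span_le.mpr hsub hspan
  rw [Submodule.mem_comap] at this
  rwa [homogeneousComponent_of_mem ((mem_homogeneousSubmodule _ _).mpr hp), if_pos rfl] at this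
end AuxLemmas

theorem linear_tensor_decomposition_implies_torus_equivariant
    (K : Type) [Field K] (s n m : ℕ)
    (p : Fin n → Fin m → MvPolynomial (Fin s) K)
    (q0 : Fin m → LaurentPoly K n)
    -- all p_{i,j} are homogeneous linear forms in a₁,…,a_s
    (hhom : ∀ i j, (p i j).IsHomogeneous 1)
    -- subrings A_j = K[W_j] generated by spaces W_j of linear forms with ⊗_K A_j = A …
    (W : Fin m → Submodule K (MvPolynomial (Fin s) K))
    (hWlin : ∀ j, W j ≤ MvPolynomial.homogeneousSubmodule (Fin s) K 1)
    (hWindep : iSupIndep W)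
    (hWspan : (⨆ j, W j) = MvPolynomial.homogeneousSubmodule (Fin s) K 1)
    -- … and p_{i,j} ∈ A_j
    (hpW : ∀ i j, p i j ∈ Algebra.adjoin K (W j : Set (MvPolynomial (Fin s) K))) :
    -- then X̂_lin = V(f̂₁,…,f̂ₙ) is torus-equivariant
    LinPartTorusEquivariant K (n := n) (m := m) p := by
  classical
  have hpWj : ∀ i j, p i j ∈ W j := fun i j =>
    aux_adjoin_linear (hWlin j) (hhom i j) (hpW i j)
  have hXmem : ∀ k : Fin s, (MvPolynomial.X k : MvPolynomial (Fin s) K) ∈ ⨆ j, W j := by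
    intro k
    rw [hWspan]
    exact (MvPolynomial.mem_homogeneousSubmodule _ _).mpr (MvPolynomial.isHomogeneous_X _ _)
  choose l hlmem hlsum using fun k => aux_decomp (hXmem k)
  set e : Fin m → TorusGroup n m := fun j => ((0, Pi.single j 1) : TorusGroup n m) with he
  set ρ : MvPolynomial (Fin s) K →ₐ[K] AddMonoidAlgebra (MvPolynomial (Fin s) K) (TorusGroup n m) :=
    MvPolynomial.aeval (fun k => ∑ j, AddMonoidAlgebra.single (e j) (l k j)) with hρ
  have hρX : ∀ k, ρ (MvPolynomial.X k) = ∑ j, AddMonoidAlgebra.single (e j) (l k j) := fun k =>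
    MvPolynomial.aeval_X _ k
  -- key existence claim: on degree-one forms, ρ is given by some decomposition
  have key : ∀ x ∈ MvPolynomial.homogeneousSubmodule (Fin s) K 1,
      ∃ g : Fin m → MvPolynomial (Fin s) K, (∀ j, g j ∈ W j) ∧ (∑ j, g j = x) ∧
        ρ x = ∑ j, AddMonoidAlgebra.single (e j) (g j) := by
    intro x hx
    have hx' := aux_mem_span_X ((MvPolynomial.mem_homogeneousSubmodule _ _).mp hx)
    clear hx
    induction hx' using Submodule.span_induction with
    | mem y hy =>
      obtain ⟨k, rfl⟩ := hy
      exact ⟨l k, hlmem k, hlsum k, hρX k⟩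
    | zero => exact ⟨0, fun j => zero_mem _, by simp, by simp⟩
    | add a b _ _ ha hb =>
      obtain ⟨ga, h1a, h2a, h3a⟩ := ha
      obtain ⟨gb, h1b, h2b, h3b⟩ := hb
      refine ⟨ga + gb, fun j => add_mem (h1a j) (h1b j), ?_, ?_⟩
      · simp only [Pi.add_apply, Finset.sum_add_distrib, h2a, h2b]
      · rw [map_add, h3a, h3b, ← Finset.sum_add_distrib]
        exact Finset.sum_congr rfl fun j _ => by
          rw [Pi.add_apply]; exact (AddMonoidAlgebra.single_add _ _ _).symm
    | smul c a _ ha =>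
      obtain ⟨g, h1, h2, h3⟩ := ha
      refine ⟨c • g, fun j => Submodule.smul_mem _ _ (h1 j), ?_, ?_⟩
      · simp only [Pi.smul_apply, ← Finset.smul_sum, h2]
      · rw [map_smul, h3, Finset.smul_sum]
        refine Finset.sum_congr rfl fun j _ => ?_
        rw [Pi.smul_apply]
        exact AddMonoidAlgebra.smul_single c (e j) (g j)
  -- on W j, ρ is multiplication by w_j
  have keyW : ∀ (j0 : Fin m) (x : MvPolynomial (Fin s) K), x ∈ W j0 →
      ρ x = AddMonoidAlgebra.single (e j0) x := by
    intro j0 x hx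
    have hx1 : x ∈ MvPolynomial.homogeneousSubmodule (Fin s) K 1 := hWlin j0 hx
    obtain ⟨g, h1, h2, h3⟩ := key x hx1
    have hg : g = fun j => if j = j0 then x else 0 := by
      refine aux_indep_sum_eq hWindep g _ h1 (fun j => ?_) ?_
      · show (if j = j0 then x else 0) ∈ W j
        split
        · next h => subst h; exact hx
        · exact zero_mem _
      · rw [h2]
        simp
    rw [h3, hg]
    have hterm : ∀ j : Fin m, AddMonoidAlgebra.single (e j) (if j = j0 then x else 0)
        = if j = j0 then AddMonoidAlgebra.single (e j0) x else 0 := by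
      intro j
      split
      · next h => subst h; rfl
      · simp
    rw [Finset.sum_congr rfl fun j _ => hterm j, Finset.sum_ite_eq' Finset.univ j0,
      if_pos (Finset.mem_univ j0)]
  -- computation of actPoint
  have hact : ∀ (L : Type) [CommRing L] (lam : Multiplicative (TorusGroup n m) →* Lˣ)
      (P : MvPolynomial (Fin s) K →+* L) (x : MvPolynomial (Fin s) K),
      actPoint ρ lam P x = (AddMonoidAlgebra.liftNCRingHom P ((Units.coeHom L).comp lam)
        (fun _ _ => Commute.all _ _)) (ρ x) := fun L _ lam P x => rfl
  have hliftsingle : ∀ (L : Type) [CommRing L] (lam : Multiplicative (TorusGroup n m) →* Lˣ)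
      (P : MvPolynomial (Fin s) K →+* L) (g : TorusGroup n m) (a : MvPolynomial (Fin s) K),
      (AddMonoidAlgebra.liftNCRingHom P ((Units.coeHom L).comp lam)
        (fun _ _ => Commute.all _ _)) (AddMonoidAlgebra.single g a)
        = P a * (lam (Multiplicative.ofAdd g) : L) := by
    intro L _ lam P g a
    exact AddMonoidAlgebra.liftNC_single _ _ _ _
  have hactW : ∀ (L : Type) [CommRing L] (lam : Multiplicative (TorusGroup n m) →* Lˣ)
      (P : MvPolynomial (Fin s) K →+* L) (j0 : Fin m) (x : MvPolynomial (Fin s) K), x ∈ W j0 →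
      actPoint ρ lam P x = P x * (lam (Multiplicative.ofAdd (e j0)) : L) := by
    intro L _ lam P j0 x hx
    rw [hact, keyW j0 x hx, hliftsingle]
  have hactC : ∀ (L : Type) [CommRing L] (lam : Multiplicative (TorusGroup n m) →* Lˣ)
      (P : MvPolynomial (Fin s) K →+* L) (c : K),
      actPoint ρ lam P (MvPolynomial.C c) = P (MvPolynomial.C c) := by
    intro L _ lam P c
    rw [hact]
    have hC : ρ (MvPolynomial.C c) = AddMonoidAlgebra.single 0 (MvPolynomial.C c) := by
      have h1 : (MvPolynomial.C c : MvPolynomial (Fin s) K)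
          = algebraMap K (MvPolynomial (Fin s) K) c := rfl
      rw [h1, ρ.commutes]
      simp [AddMonoidAlgebra.coe_algebraMap]
    rw [hC, hliftsingle]
    simp
  have hactX : ∀ (L : Type) [CommRing L] (lam : Multiplicative (TorusGroup n m) →* Lˣ)
      (P : MvPolynomial (Fin s) K →+* L) (k : Fin s),
      actPoint ρ lam P (MvPolynomial.X k)
        = ∑ j, P (l k j) * (lam (Multiplicative.ofAdd (e j)) : L) := by
    intro L _ lam P k
    rw [hact, hρX, map_sum]
    exact Finset.sum_congr rfl fun j _ => hliftsingle L lam P (e j) (l k j)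
  refine ⟨ρ, ?_, ?_, ?_⟩
  · -- identity acts trivially
    intro L _ P
    apply MvPolynomial.ringHom_ext
    · intro c; exact hactC L 1 P c
    · intro k
      rw [hactX]
      simp only [MonoidHom.one_apply, Units.val_one, mul_one]
      rw [← map_sum P, hlsum k]
  · -- compatibility with multiplication
    intro L _ lam mu P
    apply MvPolynomial.ringHom_ext
    · intro c
      rw [hactC, hactC, hactC]
    · intro k
      rw [hactX, hactX]
      refine Finset.sum_congr rfl fun j _ => ?_
      rw [hactW L mu P j (l k j) (hlmem k j)]
      simp only [MonoidHom.mul_apply, Units.val_mul]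
      ring
  · -- equivariance of the fibers of the linear part
    intro L _ lam P
    unfold linFiberIdeal
    rw [Ideal.map_span, ← Set.range_comp]
    congr 1
    apply congrArg Set.range
    funext i
    simp only [Function.comp_apply]
    simp only [show ∀ j : Fin m, ((0 : Fin n → ℤ), Pi.single j 1) = e j from fun j => rfl]
    rw [map_sum]
    refine Finset.sum_congr rfl fun j _ => ?_
    have htrans : (translationHom L (TorusGroup n m) ((Units.coeHom L).comp lam)).toRingHom
        (AddMonoidAlgebra.single (e j) (P (p i j)))
        = AddMonoidAlgebra.single (e j) (P (p i j) * (lam (Multiplicative.ofAdd (e j)) : L)) := by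
      show (translationHom L (TorusGroup n m) ((Units.coeHom L).comp lam))
        (AddMonoidAlgebra.single (e j) (P (p i j))) = _
      rw [translationHom, AddMonoidAlgebra.lift_single]
      simp [AddMonoidAlgebra.singleHom_apply, AddMonoidAlgebra.smul_single']
    rw [htrans, hactW L lam P j (p i j) (hpWj i j)]
end
end
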